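/- For any pure unit quaternions A and B there exist a unit quaternion g and a unique γ ∈ [0, π] such that g·A·g⁻¹ = i and g·B·g⁻¹ = e^{γk}·i. (This identifies the traceless character variety R(B³, A₁ ∪ A₂) of two unknotted arcs in a 3-ball — whose tangle complement has free fundamental group on the two meridians — with the arc [0, π], embedding in the pillowcase as the diagonal arc θ = γ.) -/

import Mathlib

open Quaternion

noncomputable section

/-- The quaternion `i`. -/
def qi : ℍ[ℝ] := ⟨0, 1, 0, 0⟩

/-- The quaternion `k`. -/
def qk : ℍ[ℝ] := ⟨0, 0, 0, 1⟩

/-- The quaternionic exponential `e^{tQ} = cos t + (sin t) • Q` for a pure unit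
quaternion `Q`. -/
def expQ (t : ℝ) (Q : ℍ[ℝ]) : ℍ[ℝ] := ((Real.cos t : ℝ) : ℍ[ℝ]) + (Real.sin t) • Q

/-!
Conjugation by a nonzero quaternion preserves the real part and the norm, so
`Re (A B) = Re (i · e^{γk} i) = -cos γ` pins down `γ ∈ [0, π]`.
For existence: if `u` and `v` are pure quaternions of the same norm, then `|u|² - v u`
conjugates `u` to `v` (it vanishes only when `u = -v`), and it commutes with every quaternion
anticommuting with both. Used once, this moves `A` to `i`; used in the centralizer of `i`,
it turns the `jk`-part of the image of `B` onto the positive `j`-axis.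
-/

namespace Quaternion

theorem re_mul_comm {R : Type*} [CommRing R] (a b : ℍ[R]) : (a * b).re = (b * a).re := by
  simp only [re_mul]
  ring

section LinearOrderedField

variable {R : Type*} [Field R] [LinearOrder R] [IsStrictOrderedRing R] {g u v x y : ℍ[R]}

theorem re_eq_of_semiconjBy (hg : g ≠ 0) (h : SemiconjBy g x y) : y.re = x.re := by
  rw [← (mul_inv_eq_iff_eq_mul₀ hg).2 h.eq, re_mul_comm, ← mul_assoc, inv_mul_cancel₀ hg,
    one_mul]

theorem normSq_eq_of_semiconjBy (hg : g ≠ 0) (h : SemiconjBy g x y) : normSq y = normSq x := by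
  have h' := congrArg normSq h.eq
  rw [map_mul, map_mul, mul_comm (normSq y)] at h'
  exact (mul_left_cancel₀ (normSq_ne_zero.2 hg) h').symm

theorem semiconjBy_neg_of_anticommute (h : x * v = -(v * x)) : SemiconjBy x (-v) v := by
  rw [SemiconjBy, mul_neg, h, neg_neg]

/-- Both sides equal `|u|² (u + v)`, because `u² = v² = -|u|²`. -/
theorem semiconjBy_normSq_sub_mul (hu : u.re = 0) (hv : v.re = 0) (h : normSq u = normSq v) :
    SemiconjBy (((normSq u : R) : ℍ[R]) - v * u) u v := by
  have hu2 : u * u = -((normSq u : R) : ℍ[R]) := by rw [← sq]; exact sq_eq_neg_normSq.2 hu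
  have hv2 : v * v = -((normSq u : R) : ℍ[R]) := by rw [← sq, h]; exact sq_eq_neg_normSq.2 hv
  rw [SemiconjBy, sub_mul, mul_sub, mul_assoc, hu2, ← mul_assoc, hv2, neg_mul, coe_commutes]
  noncomm_ring

theorem eq_neg_of_normSq_sub_mul_eq_zero (hv : v.re = 0) (h : normSq u = normSq v)
    (h0 : ((normSq u : R) : ℍ[R]) - v * u = 0) : u = -v := by
  have hv2 : v * v = -((normSq u : R) : ℍ[R]) := by rw [← sq, h]; exact sq_eq_neg_normSq.2 hv
  have hvuv : v * (u + v) = 0 := by rw [mul_add, hv2, ← sub_eq_zero.1 h0]; abel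
  rcases mul_eq_zero.1 hvuv with rfl | huv
  · rwa [map_zero, normSq_eq_zero, ← neg_zero] at h
  · exact eq_neg_of_add_eq_zero_left huv

theorem exists_semiconjBy_commute_of_anticommute (hu : u.re = 0) (hv : v.re = 0)
    (h : normSq u = normSq v) (hx : x ≠ 0) (hxu : x * u = -(u * x)) (hxv : x * v = -(v * x)) :
    ∃ g ≠ 0, SemiconjBy g u v ∧ Commute g x := by
  by_cases h0 : ((normSq u : R) : ℍ[R]) - v * u = 0
  · obtain rfl := eq_neg_of_normSq_sub_mul_eq_zero hv h h0
    exact ⟨x, hx, semiconjBy_neg_of_anticommute hxv, Commute.refl x⟩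
  · refine ⟨_, h0, semiconjBy_normSq_sub_mul hu hv h, ?_⟩
    have hvu : Commute (v * u) x := by
      rw [Commute, SemiconjBy, mul_assoc, ← neg_neg (u * x), ← hxu, ← mul_assoc x, hxv]
      noncomm_ring
    exact (coe_commute _ x).sub_left hvu

end LinearOrderedField

end Quaternion

def qj : ℍ[ℝ] := ⟨0, 0, 1, 0⟩

@[simp] theorem qi_re : qi.re = 0 := rfl
@[simp] theorem qi_imI : qi.imI = 1 := rfl
@[simp] theorem qi_imJ : qi.imJ = 0 := rfl
@[simp] theorem qi_imK : qi.imK = 0 := rfl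
@[simp] theorem qj_re : qj.re = 0 := rfl
@[simp] theorem qj_imI : qj.imI = 0 := rfl
@[simp] theorem qj_imJ : qj.imJ = 1 := rfl
@[simp] theorem qj_imK : qj.imK = 0 := rfl
@[simp] theorem qk_re : qk.re = 0 := rfl
@[simp] theorem qk_imI : qk.imI = 0 := rfl
@[simp] theorem qk_imJ : qk.imJ = 0 := rfl
@[simp] theorem qk_imK : qk.imK = 1 := rfl

theorem qi_ne_zero : qi ≠ 0 := fun h ↦ by simpa using congrArg QuaternionAlgebra.imI h

theorem qj_ne_zero : qj ≠ 0 := fun h ↦ by simpa using congrArg QuaternionAlgebra.imJ h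

theorem normSq_qi : normSq qi = 1 := by simp [normSq_def']

theorem qj_mul_qi : qj * qi = -(qi * qj) := by
  ext <;> simp [re_mul, imI_mul, imJ_mul, imK_mul]

theorem qi_mul_smul_qj_add_smul_qk (b c : ℝ) :
    qi * (b • qj + c • qk) = -((b • qj + c • qk) * qi) := by
  ext <;> simp [re_mul, imI_mul, imJ_mul, imK_mul]

theorem expQ_qk_mul_qi (γ : ℝ) : expQ γ qk * qi = Real.cos γ • qi + Real.sin γ • qj := by
  ext <;> simp [expQ, re_mul, imI_mul, imJ_mul, imK_mul]

theorem smul_qi_add_smul_qj_eq_expQ {a b : ℝ} (h : a ^ 2 + b ^ 2 = 1) (hb : 0 ≤ b) :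
    a • qi + b • qj = expQ (Real.arccos a) qk * qi := by
  have ha : |a| ≤ 1 := abs_le_one_iff_mul_self_le_one.2 (by nlinarith)
  rw [expQ_qk_mul_qi, Real.cos_arccos (abs_le.1 ha).1 (abs_le.1 ha).2, Real.sin_arccos,
    show 1 - a ^ 2 = b ^ 2 by linarith, Real.sqrt_sq hb]

theorem exists_semiconjBy_qi {A : ℍ[ℝ]} (hre : A.re = 0) (hn : normSq A = 1) :
    ∃ g ≠ 0, SemiconjBy g A qi := by
  have hAi : normSq A = normSq qi := by rw [hn, normSq_qi]
  by_cases h0 : ((normSq A : ℝ) : ℍ[ℝ]) - qi * A = 0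
  · obtain rfl := eq_neg_of_normSq_sub_mul_eq_zero qi_re hAi h0
    exact ⟨qj, qj_ne_zero, semiconjBy_neg_of_anticommute qj_mul_qi⟩
  · exact ⟨_, h0, semiconjBy_normSq_sub_mul hre qi_re hAi⟩

theorem exists_commute_qi_semiconjBy {B : ℍ[ℝ]} (hre : B.re = 0) :
    ∃ w ≠ 0, Commute w qi ∧
      SemiconjBy w B (B.imI • qi + √(B.imJ ^ 2 + B.imK ^ 2) • qj) := by
  set r := √(B.imJ ^ 2 + B.imK ^ 2) with hr
  have hPQ : normSq (B.imJ • qj + B.imK • qk) = normSq (r • qj + (0 : ℝ) • qk) := by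
    simp [normSq_def', hr, Real.sq_sqrt (by positivity : 0 ≤ B.imJ ^ 2 + B.imK ^ 2)]
  obtain ⟨w, hw, hwPQ, hwi⟩ := exists_semiconjBy_commute_of_anticommute (by simp) (by simp) hPQ
    qi_ne_zero (qi_mul_smul_qj_add_smul_qk B.imJ B.imK) (qi_mul_smul_qj_add_smul_qk r 0)
  have hB : B = B.imI • qi + (B.imJ • qj + B.imK • qk) := by ext <;> simp [hre]
  refine ⟨w, hw, hwi, ?_⟩
  rw [hB]
  simpa using SemiconjBy.add_right (SemiconjBy.smul_right hwi B.imI) hwPQ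

theorem exists_semiconjBy_qi_expQ {A B : ℍ[ℝ]} (hAre : A.re = 0) (hA : normSq A = 1)
    (hBre : B.re = 0) (hB : normSq B = 1) :
    ∃ g ≠ 0, ∃ γ ∈ Set.Icc 0 Real.pi,
      SemiconjBy g A qi ∧ SemiconjBy g B (expQ γ qk * qi) := by
  obtain ⟨g, hg, hgA⟩ := exists_semiconjBy_qi hAre hA
  set C := g * B * g⁻¹
  have hgB : SemiconjBy g B C := (mul_inv_eq_iff_eq_mul₀ hg).1 rfl
  obtain ⟨w, hw, hwi, hwB⟩ :=
    exists_commute_qi_semiconjBy ((re_eq_of_semiconjBy hg hgB).trans hBre)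
  have hnormSq :=
    (normSq_eq_of_semiconjBy hw hwB).trans ((normSq_eq_of_semiconjBy hg hgB).trans hB)
  refine ⟨w * g, mul_ne_zero hw hg, Real.arccos C.imI,
    ⟨Real.arccos_nonneg _, Real.arccos_le_pi _⟩, SemiconjBy.mul_left hwi hgA, ?_⟩
  rw [← smul_qi_add_smul_qj_eq_expQ _ (Real.sqrt_nonneg _)]
  · exact hwB.mul_left hgB
  · simpa [normSq_def'] using hnormSq

theorem cos_eq_neg_re_mul_of_semiconjBy {g A B : ℍ[ℝ]} {γ : ℝ} (hg : g ≠ 0)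
    (hA : SemiconjBy g A qi) (hB : SemiconjBy g B (expQ γ qk * qi)) :
    Real.cos γ = -(A * B).re := by
  have h := re_eq_of_semiconjBy hg (hA.mul_right hB)
  have hre : (qi * (expQ γ qk * qi)).re = -Real.cos γ := by simp [expQ_qk_mul_qi, re_mul]
  linarith

/-- Any pair `(A,B)` of pure unit quaternions is conjugate to `(i, e^{γk}i)` for a
unique `γ ∈ [0,π]`; this identifies the traceless character variety of the trivial
two-stranded tangle in a 3-ball with the arc `[0,π]`. -/
theorem pair_normal_form_unique_angle (A B : ℍ[ℝ])
    (hAnorm : ‖A‖ = 1) (hAre : A.re = 0)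
    (hBnorm : ‖B‖ = 1) (hBre : B.re = 0) :
    ∃ g : ℍ[ℝ], ∃ γ : ℝ, ‖g‖ = 1 ∧ γ ∈ Set.Icc 0 Real.pi ∧
      g * A * g⁻¹ = qi ∧ g * B * g⁻¹ = expQ γ qk * qi ∧
      ∀ g' : ℍ[ℝ], ∀ γ' : ℝ, ‖g'‖ = 1 → γ' ∈ Set.Icc 0 Real.pi →
        g' * A * g'⁻¹ = qi → g' * B * g'⁻¹ = expQ γ' qk * qi → γ' = γ := by
  have hA : normSq A = 1 := by rw [normSq_eq_norm_mul_self, hAnorm, one_mul]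
  have hB : normSq B = 1 := by rw [normSq_eq_norm_mul_self, hBnorm, one_mul]
  obtain ⟨g, hg, γ, hγ, hgA, hgB⟩ := exists_semiconjBy_qi_expQ hAre hA hBre hB
  have hgn : ‖g‖ ≠ 0 := norm_ne_zero_iff.2 hg
  have hu : ‖g‖⁻¹ • g ≠ 0 := smul_ne_zero (inv_ne_zero hgn) hg
  refine ⟨‖g‖⁻¹ • g, γ, ?_, hγ, (mul_inv_eq_iff_eq_mul₀ hu).2 (hgA.smul_left _),
    (mul_inv_eq_iff_eq_mul₀ hu).2 (hgB.smul_left _), ?_⟩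
  · rw [norm_smul, norm_inv, norm_norm, inv_mul_cancel₀ hgn]
  intro g' γ' hg'n hγ' hg'A hg'B
  have hg' : g' ≠ 0 := norm_ne_zero_iff.1 (by rw [hg'n]; exact one_ne_zero)
  apply Real.injOn_cos hγ' hγ
  rw [cos_eq_neg_re_mul_of_semiconjBy hg' ((mul_inv_eq_iff_eq_mul₀ hg').1 hg'A)
      ((mul_inv_eq_iff_eq_mul₀ hg').1 hg'B), cos_eq_neg_re_mul_of_semiconjBy hg hgA hgB]
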